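/- arXiv:1212.1816 — 3 statements merged into one kernel-verified Lean document; each statement's English description precedes it below -/
import Mathlib

section
/- For every t ∈ ℂ with t ∉ {0, μ³, 1/μ}: ψ(λ(t)) = (t − μ³)/(μ(μt − 1)) + μ(μt − 1)/(t − μ³), and consequently ψ(λ(μ²/t)) = ψ(λ(t)); that is, the map t ↦ ψ(λ(t)) is invariant under the substitution t ↦ μ²/t. -/
open Complex Set Filter MeasureTheory

/-- `μ = (R - √(R²-4))/2`. -/
noncomputable def mu (R : ℝ) : ℝ := (R - Real.sqrt (R ^ 2 - 4)) / 2

/-- The Möbius transformation `λ(z) = (z - μ)/(μz - 1)`. -/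
noncomputable def lam (R : ℝ) (z : ℂ) : ℂ := (z - (mu R : ℂ)) / ((mu R : ℂ) * z - 1)

/-- The shifted Zhukovsky-type map `ψ(w) = Rw - 1 + 1/(Rw - 1)`. -/
noncomputable def psi (R : ℝ) (w : ℂ) : ℂ := (R : ℂ) * w - 1 + ((R : ℂ) * w - 1)⁻¹

/-- `χ(t) = t ∑_{k ∈ ℤ} μ^{4k} exp((μ - 1/μ) μ^{4k} t)`. -/
noncomputable def chi (R : ℝ) (t : ℂ) : ℂ :=
  t * ∑' k : ℤ, (mu R : ℂ) ^ (4 * k) *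
    Complex.exp (((mu R : ℂ) - (mu R : ℂ)⁻¹) * (mu R : ℂ) ^ (4 * k) * t)

/-- The region `D = {t : |t - 1/R| < 1/R, Re t > Rμ²/2}`. -/
def Dset (R : ℝ) : Set ℂ :=
  {t | ‖t - 1 / (R : ℂ)‖ < 1 / R ∧ R * (mu R) ^ 2 / 2 < t.re}

/-- The region `𝔇 = {w : |w - R/(R²-1)| > 1/(R²-1), |w| < 1}`. -/
def frakD (R : ℝ) : Set ℂ :=
  {w | 1 / (R ^ 2 - 1) < ‖w - (R : ℂ) / (((R : ℝ) ^ 2 - 1 : ℝ) : ℂ)‖ ∧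
    ‖w‖ < 1}

/-- The orthogonality domain `G₁ = ψ(𝔇)`. -/
noncomputable def G1 (R : ℝ) : Set ℂ := psi R '' frakD R

/-- `p` is the sequence of Carleman (Bergman) orthonormal polynomials of `G₁`:
`p n` has degree `n`, real positive leading coefficient, and
`(1/π) ∫_{G₁} pₙ conj(pₘ) dA = δ_{n,m}`. -/
def IsCarleman (R : ℝ) (p : ℕ → Polynomial ℂ) : Prop :=
  (∀ n, (p n).natDegree = n) ∧
  (∀ n, 0 < (p n).leadingCoeff.re ∧ (p n).leadingCoeff.im = 0) ∧
  (∀ n m, ∫ z in G1 R, (p n).eval z * (starRingEnd ℂ) ((p m).eval z) =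
      if n = m then (Real.pi : ℂ) else 0)

/-- The limit functions `f_q` of Theorem 1.1. -/
noncomputable def fq (R q : ℝ) (t : ℂ) : ℂ :=
  (1 - (mu R : ℂ) * t) ^ 2 * (1 - (mu R : ℂ) ^ 3 / t) ^ 2 / ((1 - (mu R : ℂ) ^ 4) * R) *
    ((chi R ((((mu R) ^ (4 * q) : ℝ) : ℂ) * t) -
        chi R ((((mu R) ^ (4 * q + 2) : ℝ) : ℂ) / t)) /
      (t - (mu R : ℂ) ^ 2 / t))

/-- `Gₙ(t) = μ^{-n} λ(t)ⁿ λ'(t)`. -/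
noncomputable def Gfun (R : ℝ) (n : ℕ) (t : ℂ) : ℂ :=
  ((mu R : ℂ) ^ n)⁻¹ * (lam R t) ^ n * deriv (lam R) t

/-! Since `μ² - Rμ + 1 = 0`, i.e. `R = μ + 1/μ`, the Möbius map collapses to
`R λ(t) - 1 = A(t) = (t - μ³)/(μ(μt - 1))` (`psiArg μ t`), so `ψ(λ(t)) = A(t) + 1/A(t)` is the
Zhukovsky map `z ↦ z + 1/z` evaluated at `A(t)`. The substitution `t ↦ μ²/t` inverts `A`, and
`z + 1/z` is invariant under `z ↦ 1/z`. -/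

section Field

variable {K : Type*} [Field K] {m r t : K}

def psiArg (m t : K) : K := (t - m ^ 3) / (m * (m * t - 1))

theorem psiArg_sq_div (hm : m ≠ 0) (ht : t ≠ 0) : psiArg m (m ^ 2 / t) = (psiArg m t)⁻¹ := by
  have hmt : m ^ 2 / t ≠ 0 := div_ne_zero (pow_ne_zero 2 hm) ht
  calc psiArg m (m ^ 2 / t)
      = m ^ 2 / t * (1 - m * t) / (m ^ 2 / t * ((m ^ 3 - t) / m)) := by
        rw [psiArg]; congr 1 <;> field_simp
    _ = m * (m * t - 1) / (t - m ^ 3) := by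
        rw [mul_div_mul_left _ _ hmt, div_div_eq_mul_div, mul_comm, ← neg_div_neg_eq]
        ring_nf
    _ = (psiArg m t)⁻¹ := by rw [psiArg, inv_div]

theorem mul_div_sub_one_eq_psiArg (hrel : m ^ 2 - r * m + 1 = 0) (ht : m * t - 1 ≠ 0) :
    r * ((t - m) / (m * t - 1)) - 1 = psiArg m t := by
  have hm : m ≠ 0 := by rintro rfl; simp at hrel
  rw [mul_div_assoc', div_sub_one ht, psiArg, div_eq_div_iff ht (mul_ne_zero hm ht)]
  linear_combination (t + t * m ^ 2 - t ^ 2 * m - m) * hrel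

end Field

theorem mu_sq_sub_mul_add_one {R : ℝ} (hR : 2 ≤ R) : mu R ^ 2 - R * mu R + 1 = 0 := by
  have hs : Real.sqrt (R ^ 2 - 4) ^ 2 = R ^ 2 - 4 := Real.sq_sqrt (by nlinarith)
  rw [mu]
  linear_combination hs / 4

theorem mu_ne_zero {R : ℝ} (hR : 2 ≤ R) : mu R ≠ 0 := by
  intro h
  simpa [h] using mu_sq_sub_mul_add_one hR

theorem psi_lam_eq {R : ℝ} (hR : 2 ≤ R) {t : ℂ} (ht : t ≠ (mu R : ℂ)⁻¹) :
    psi R (lam R t) = psiArg (mu R : ℂ) t + (psiArg (mu R : ℂ) t)⁻¹ := by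
  have hrel : (mu R : ℂ) ^ 2 - R * mu R + 1 = 0 := by exact_mod_cast mu_sq_sub_mul_add_one hR
  have hden : (mu R : ℂ) * t - 1 ≠ 0 := by
    rwa [sub_ne_zero, Ne, ← eq_inv_mul_iff_mul_eq₀ (ofReal_ne_zero.mpr (mu_ne_zero hR)), mul_one]
  rw [psi, lam, mul_div_sub_one_eq_psiArg hrel hden]

/-- `ψ(λ(t)) = (t - μ³)/(μ(μt - 1)) + μ(μt - 1)/(t - μ³)`, hence `ψ∘λ` is invariant
under `t ↦ μ²/t`. -/
theorem stmt_8 (R : ℝ) (hR : 2 < R) :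
    ∀ t : ℂ, t ≠ 0 → t ≠ (mu R : ℂ) ^ 3 → t ≠ ((mu R : ℂ))⁻¹ →
      psi R (lam R t) =
          (t - (mu R : ℂ) ^ 3) / ((mu R : ℂ) * ((mu R : ℂ) * t - 1)) +
            (mu R : ℂ) * ((mu R : ℂ) * t - 1) / (t - (mu R : ℂ) ^ 3) ∧
        psi R (lam R ((mu R : ℂ) ^ 2 / t)) = psi R (lam R t) := by
  intro t ht0 ht3 htinv
  have hm : (mu R : ℂ) ≠ 0 := ofReal_ne_zero.mpr (mu_ne_zero hR.le)
  have hs : (mu R : ℂ) ^ 2 / t ≠ (mu R : ℂ)⁻¹ := by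
    rwa [Ne, div_eq_iff ht0, eq_inv_mul_iff_mul_eq₀ hm, ← pow_succ', eq_comm]
  refine ⟨by rw [psi_lam_eq hR.le htinv, psiArg, inv_div], ?_⟩
  rw [psi_lam_eq hR.le hs, psi_lam_eq hR.le htinv, psiArg_sq_div hm ht0, inv_inv, add_comm]
end

section
/- Let t₀ ∈ ℂ satisfy μ² < |t₀| < 1 and μ < |λ(t₀)| < 1. Then for every integer k ≥ 1, |λ(μ^{4k} t₀)| < |λ(t₀)|. -/
open Complex Set Filter MeasureTheory

/-! With `a = μ`, `|λ(z)|² = 1 - (1 - a²)(1 - |z|²)/|a z - 1|²`, so `|λ(z)|` is decreasing in the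
Poincaré density `(1 - |z|²)/|a z - 1|²`. The hypothesis `|λ(t₀)| > μ = |λ(0)|` says the density at
`t₀` is smaller than at `0`; along the ray `s ↦ s t₀` the difference of densities (cleared of
denominators) is a concave quadratic in `s` that is positive at `s = 0` and vanishes at `s = 1`,
hence positive on `[0, 1)`. Take `s = μ^{4k}`. -/

lemma mu_pos {R : ℝ} (hR : 2 < R) : 0 < mu R := by
  have : Real.sqrt (R ^ 2 - 4) < R := (Real.sqrt_lt' (by linarith)).mpr (by nlinarith)
  unfold mu
  linarith

lemma mu_lt_one {R : ℝ} (hR : 2 < R) : mu R < 1 := by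
  have : R - 2 < Real.sqrt (R ^ 2 - 4) := by
    rw [← Real.sqrt_sq (by linarith : 0 ≤ R - 2)]
    exact Real.sqrt_lt_sqrt (by positivity) (by nlinarith)
  unfold mu
  linarith

lemma normSq_mul_sub_one_sub_normSq_sub (a : ℝ) (z : ℂ) :
    normSq (a * z - 1) - normSq (z - a) = (1 - a ^ 2) * (1 - normSq z) := by
  simp only [normSq_apply, sub_re, sub_im, mul_re, mul_im, ofReal_re, ofReal_im, one_re, one_im]
  ring

lemma mul_sub_one_ne_zero {a : ℝ} (ha : a ^ 2 < 1) {z : ℂ} (hz : ‖z‖ ≤ 1) :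
    (a : ℂ) * z - 1 ≠ 0 := by
  have ha' : |a| < 1 := (sq_lt_one_iff_abs_lt_one a).mp ha
  intro h
  have : ‖(a : ℂ) * z‖ < 1 := by
    rw [norm_mul, norm_real, Real.norm_eq_abs]
    nlinarith [abs_nonneg a, norm_nonneg z]
  rw [sub_eq_zero.mp h, norm_one] at this
  exact this.false

lemma norm_mobius_lt_norm_mobius_iff {a : ℝ} (ha : a ^ 2 < 1) {z w : ℂ}
    (hz : (a : ℂ) * z - 1 ≠ 0) (hw : (a : ℂ) * w - 1 ≠ 0) :
    ‖(z - a) / (a * z - 1)‖ < ‖(w - a) / (a * w - 1)‖ ↔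
      (1 - normSq w) * normSq (a * z - 1) < (1 - normSq z) * normSq (a * w - 1) := by
  rw [← sq_lt_sq₀ (norm_nonneg _) (norm_nonneg _), Complex.sq_norm, Complex.sq_norm,
    map_div₀, map_div₀, div_lt_div_iff₀ (normSq_pos.mpr hz) (normSq_pos.mpr hw)]
  have hdiff : normSq (w - a) * normSq (a * z - 1) - normSq (z - a) * normSq (a * w - 1) =
      (1 - a ^ 2) *
        ((1 - normSq z) * normSq (a * w - 1) - (1 - normSq w) * normSq (a * z - 1)) := by
    linear_combination normSq (a * w - 1) * normSq_mul_sub_one_sub_normSq_sub a z -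
      normSq (a * z - 1) * normSq_mul_sub_one_sub_normSq_sub a w
  rw [← sub_pos, hdiff, mul_pos_iff_of_pos_left (by linarith), sub_pos]

lemma poincare_density_lt_of_mem_Ico {a s : ℝ} (hs0 : 0 ≤ s) (hs1 : s < 1) {t : ℂ}
    (ht : normSq t ≤ 1) (hlt : 1 - normSq t < normSq (a * t - 1)) :
    (1 - normSq t) * normSq (a * (s * t) - 1) < (1 - normSq (s * t)) * normSq (a * t - 1) := by
  have hfactor : (1 - normSq (s * t)) * normSq (a * t - 1)
      - (1 - normSq t) * normSq (a * (s * t) - 1) =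
      (1 - s) * ((normSq (a * t - 1) - (1 - normSq t))
        + s * normSq t * (normSq (a * t - 1) + a ^ 2 * (1 - normSq t))) := by
    simp only [normSq_apply, sub_re, sub_im, mul_re, mul_im, ofReal_re, ofReal_im, one_re,
      one_im]
    ring
  have hpos : 0 < (1 - s) * ((normSq (a * t - 1) - (1 - normSq t))
      + s * normSq t * (normSq (a * t - 1) + a ^ 2 * (1 - normSq t))) := by
    apply mul_pos (by linarith)
    apply add_pos_of_pos_of_nonneg (by linarith)
    have := normSq_nonneg (a * t - 1)
    have := normSq_nonneg t
    have : 0 ≤ 1 - normSq t := by linarith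
    positivity
  linarith

lemma norm_mobius_smul_lt {a s : ℝ} (ha : a ^ 2 < 1) (hs0 : 0 ≤ s) (hs1 : s < 1) {t : ℂ}
    (ht : ‖t‖ ≤ 1) (hat : |a| < ‖(t - a) / (a * t - 1)‖) :
    ‖(s * t - a) / (a * (s * t) - 1)‖ < ‖(t - a) / (a * t - 1)‖ := by
  have hst : ‖(s : ℂ) * t‖ ≤ 1 := by
    rw [norm_mul, norm_real, Real.norm_of_nonneg hs0]
    nlinarith [norm_nonneg t]
  have hnt : normSq t ≤ 1 := by
    rw [normSq_eq_norm_sq]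
    nlinarith [norm_nonneg t]
  have h0 : ‖((0 : ℂ) - a) / (a * 0 - 1)‖ = |a| := by simp
  rw [← h0, norm_mobius_lt_norm_mobius_iff ha (by simp) (mul_sub_one_ne_zero ha ht)] at hat
  rw [norm_mobius_lt_norm_mobius_iff ha (mul_sub_one_ne_zero ha hst) (mul_sub_one_ne_zero ha ht)]
  simp only [mul_zero, zero_sub, normSq_neg, normSq_one, mul_one, one_mul, map_zero,
    sub_zero] at hat
  exact poincare_density_lt_of_mem_Ico hs0 hs1 hnt hat

theorem stmt_10_general (R : ℝ) (hR : 2 < R) (t₀ : ℂ)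
    (h2 : ‖t₀‖ < 1)
    (h3 : mu R < ‖lam R t₀‖) :
    ∀ k : ℕ, 1 ≤ k → ‖lam R ((mu R : ℂ) ^ (4 * k) * t₀)‖ <
      ‖lam R t₀‖ := by
  intro k hk
  have hμ0 := mu_pos hR
  have hμ1 := mu_lt_one hR
  have hcast : (mu R : ℂ) ^ (4 * k) * t₀ = ((mu R ^ (4 * k) : ℝ) : ℂ) * t₀ := by push_cast; rfl
  rw [hcast]
  rw [← abs_of_pos hμ0] at h3
  exact norm_mobius_smul_lt (by nlinarith) (by positivity)
    (pow_lt_one₀ hμ0.le hμ1 (by omega)) h2.le h3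

/-- Inequality (modulo): if `μ² < |t₀| < 1` and `μ < |λ(t₀)| < 1` then
`|λ(μ^{4k} t₀)| < |λ(t₀)|` for all `k ≥ 1`. -/
theorem stmt_10 (R : ℝ) (hR : 2 < R) (t₀ : ℂ)
    (h1 : (mu R) ^ 2 < ‖t₀‖) (h2 : ‖t₀‖ < 1)
    (h3 : mu R < ‖lam R t₀‖) (h4 : ‖lam R t₀‖ < 1) :
    ∀ k : ℕ, 1 ≤ k → ‖lam R ((mu R : ℂ) ^ (4 * k) * t₀)‖ <
      ‖lam R t₀‖ :=
  stmt_10_general R hR t₀ h2 h3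
end

section
/- Let (a_n)_{n≥1} be a sequence of real numbers such that a_n → +∞ and a_{n+1} − a_n → 0 as n → ∞. Then the set of fractional parts {⟨a_n⟩ : n ≥ 1} is dense in the interval [0,1]. -/
open Filter

/-- If `aₙ → +∞` and `aₙ₊₁ - aₙ → 0`, then the fractional parts `⟨aₙ⟩` are dense
in `[0,1]`. -/
theorem stmt_19 (a : ℕ → ℝ) (h1 : Tendsto a atTop atTop)
    (h2 : Tendsto (fun n => a (n + 1) - a n) atTop (nhds 0)) :
    Set.Icc (0 : ℝ) 1 ⊆ closure (Set.range fun n => Int.fract (a n)) := by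
  classical
  intro x hx
  rw [Metric.mem_closure_iff]
  intro ε hε
  set δ : ℝ := min (ε / 2) (1 / 2) with hδdef
  have hδ : 0 < δ := lt_min (by linarith) (by norm_num)
  have hδ1 : δ ≤ 1 / 2 := min_le_right _ _
  have hδε : δ ≤ ε / 2 := min_le_left _ _
  set y : ℝ := min x (1 - δ) with hy
  have hy0 : 0 ≤ y := le_min hx.1 (by linarith)
  have hy1 : y + δ ≤ 1 := by
    have := min_le_right x (1 - δ); linarith
  have hyx : |y - x| ≤ δ := by
    rcases le_or_gt x (1 - δ) with h | h
    · simp [hy, min_eq_left h]; positivity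
    · rw [hy, min_eq_right h.le, abs_le]
      constructor
      · linarith [hx.2]
      · linarith
  obtain ⟨N, hN⟩ := Metric.tendsto_atTop.mp h2 δ hδ
  set m : ℤ := ⌊a N⌋ + 1 with hm
  have hmN : a N < (m : ℝ) + y := by
    have h := Int.lt_floor_add_one (a N)
    have : ((m : ℤ) : ℝ) = (⌊a N⌋ : ℝ) + 1 := by push_cast [hm]; ring
    linarith [this ▸ h]
  have hex : ∃ k : ℕ, (m : ℝ) + y ≤ a (N + k) := by
    obtain ⟨M, hM⟩ := (tendsto_atTop.mp h1 ((m : ℝ) + y)).exists_forall_of_atTop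
    exact ⟨M, hM (N + M) (Nat.le_add_left _ _)⟩
  have hkpos : 0 < Nat.find hex := by
    rcases Nat.eq_zero_or_pos (Nat.find hex) with h0 | h
    · exfalso
      have := Nat.find_spec hex
      rw [h0] at this
      simp at this
      linarith
    · exact h
  have hspec : (m : ℝ) + y ≤ a (N + Nat.find hex) := Nat.find_spec hex
  have hprev : a (N + (Nat.find hex - 1)) < (m : ℝ) + y := by
    have h := Nat.find_min hex (Nat.sub_lt hkpos one_pos)
    push_neg at h
    exact h
  have hidx : N + (Nat.find hex - 1) + 1 = N + Nat.find hex := by omega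
  have hstep : |a (N + Nat.find hex) - a (N + (Nat.find hex - 1))| < δ := by
    have := hN (N + (Nat.find hex - 1)) (Nat.le_add_right _ _)
    rw [Real.dist_eq, sub_zero, hidx] at this
    exact this
  set n := N + Nat.find hex with hn
  have hub : a n < (m : ℝ) + y + δ := by
    have := abs_lt.mp hstep
    linarith [this.1, this.2]
  have hfloor : ⌊a n⌋ = m := by
    rw [Int.floor_eq_iff]
    constructor
    · linarith
    · push_cast; linarith
  have hfract : Int.fract (a n) = a n - (m : ℝ) := by
    rw [Int.fract, hfloor]
  refine ⟨Int.fract (a n), ⟨n, rfl⟩, ?_⟩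
  rw [Real.dist_eq, hfract]
  have h1' : |x - (a n - (m : ℝ))| ≤ |x - y| + |y - (a n - (m : ℝ))| := by
    have := abs_sub_le x y (a n - (m : ℝ))
    exact this
  have h2' : |y - (a n - (m : ℝ))| < δ := by
    rw [abs_lt]
    constructor <;> [linarith; linarith]
  have h3' : |x - y| ≤ δ := by rw [abs_sub_comm]; exact hyx
  calc |x - (a n - (m : ℝ))| ≤ |x - y| + |y - (a n - (m : ℝ))| := h1'
    _ < δ + δ := by linarith
    _ ≤ ε := by linarith
end
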